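/- Let W ∈ ℝ^{m×n} and X ∈ ℝ^{n×k} with rank(X) = k ≥ r and σ_r(WX) ≠ σ_{r+1}(WX). Let W₀ = U_rU_rᵀW with U_r the first r left singular vectors of WX, and let W_μ be the solution of the regularized problem (first r left singular vectors of W(XXᵀ + μI)^{1/2} projected onto W). Then ‖W₀ − W_μ‖_F ≤ (2‖W‖₂²‖W‖_F (σ₁(X)/σ_k(X) + max(1, μ/(4σ_k(X)²))) / (σ_r(WX)² − σ_{r+1}(WX)²)) · μ. -/

import Mathlib

open Matrix BigOperators

open scoped ComplexOrder in
/-- The positive semidefinite square root of a positive semidefinite matrix, as defined in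
Mathlib of December 2024 (removed since). -/
noncomputable def Matrix.PosSemidef.sqrt {𝕜 : Type*} [RCLike 𝕜] {n : Type*} [Fintype n]
    [DecidableEq n] {A : Matrix n n 𝕜} (hA : A.PosSemidef) : Matrix n n 𝕜 :=
  hA.1.eigenvectorUnitary.1 * diagonal ((↑) ∘ (√·) ∘ hA.1.eigenvalues) *
    (star hA.1.eigenvectorUnitary : Matrix n n 𝕜)

noncomputable def frobNorm {α β : Type*} [Fintype α] [Fintype β]
    (A : Matrix α β ℝ) : ℝ :=
  Real.sqrt (∑ i, ∑ j, (A i j) ^ 2)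

noncomputable def specNorm {α β : Type*} [Fintype α] [Fintype β]
    (A : Matrix α β ℝ) : ℝ :=
  sSup ((fun x : β → ℝ => Real.sqrt (∑ i, (A.mulVec x i) ^ 2)) ''
    {x | ∑ j, (x j) ^ 2 = 1})

/-!
Write `S = (WX)(WX)ᵀ = U₀Λ₀U₀ᵀ` and `T = (W(XXᵀ + μI)^{1/2})(⋯)ᵀ = U_μΛ_μU_μᵀ`. Then
`T = S + μWWᵀ`, so `0 ⪯ T - S ⪯ μ‖W‖₂² I` and Weyl's inequalities interlace the two spectra.
If `2μ‖W‖₂² ≤ δ := σ_r(WX)² - σ_{r+1}(WX)²`, every eigenvalue of `T` kept by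
`P_μ = U_{μ,r}U_{μ,r}ᵀ` is at distance at least `δ/2` from every eigenvalue of `S` discarded by
`P₀ = U_{0,r}U_{0,r}ᵀ`, and conversely; reading `ZΛ_μ - Λ₀Z = U₀ᵀ(T - S)U_μ` entrywise for
`Z = U₀ᵀU_μ` (the sin Θ argument) gives `(δ/2)‖P₀ - P_μ‖_F ≤ μ‖WWᵀ‖_F`. Otherwise
`‖P₀ - P_μ‖₂ ≤ 1`, because `(P - Q)² + (1 - P - Q)² = 1` for idempotents, and the bound is
immediate. Either way `‖(P₀ - P_μ)W‖_F ≤ 2μ‖W‖₂²‖W‖_F/δ`, and the factor depending on `X` is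
at least `1`.
-/

open scoped Matrix.Norms.L2Operator

section SquareRoot

open scoped ComplexOrder

variable {𝕜 : Type*} [RCLike 𝕜] {n : Type*} [Fintype n] [DecidableEq n] {A : Matrix n n 𝕜}

lemma Matrix.PosSemidef.conjTranspose_sqrt (hA : A.PosSemidef) : hA.sqrtᴴ = hA.sqrt := by
  simp only [Matrix.PosSemidef.sqrt, star_eq_conjTranspose, conjTranspose_mul,
    conjTranspose_conjTranspose, diagonal_conjTranspose, Matrix.mul_assoc]
  congr 3
  ext i
  simp

lemma Matrix.PosSemidef.sqrt_mul_self (hA : A.PosSemidef) : hA.sqrt * hA.sqrt = A := by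
  set U : Matrix n n 𝕜 := (hA.1.eigenvectorUnitary : Matrix n n 𝕜)
  set D : Matrix n n 𝕜 := diagonal ((↑) ∘ (√·) ∘ hA.1.eigenvalues)
  have hU : star U * U = 1 := Unitary.coe_star_mul_self _
  have hD : D * D = diagonal ((↑) ∘ hA.1.eigenvalues) := by
    simp [D, diagonal_mul_diagonal, ← RCLike.ofReal_mul,
      Real.mul_self_sqrt (hA.eigenvalues_nonneg _)]
  calc hA.sqrt * hA.sqrt = U * D * (star U * U) * D * star U := by
        simp only [Matrix.PosSemidef.sqrt, U, D, Matrix.mul_assoc]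
    _ = A := by
      rw [hU, Matrix.mul_one, Matrix.mul_assoc U, hD]
      conv_rhs => rw [hA.1.spectral_theorem, Unitary.conjStarAlgAut_apply]

lemma Matrix.PosSemidef.mul_sqrt_mul_transpose {n p : Type*} [Fintype n] [DecidableEq n]
    {A : Matrix n n ℝ} (hA : A.PosSemidef) (W : Matrix p n ℝ) :
    (W * hA.sqrt) * (W * hA.sqrt)ᵀ = W * A * Wᵀ := by
  rw [transpose_mul, ← conjTranspose_eq_transpose_of_trivial hA.sqrt, hA.conjTranspose_sqrt,
    Matrix.mul_assoc, ← Matrix.mul_assoc hA.sqrt, hA.sqrt_mul_self, Matrix.mul_assoc]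

end SquareRoot

section Norms

variable {α β γ : Type*} [Fintype α] [Fintype β] [Fintype γ]

lemma sum_sq_eq_norm_toLp_sq (x : β → ℝ) : ∑ j, x j ^ 2 = ‖WithLp.toLp 2 x‖ ^ 2 :=
  (EuclideanSpace.real_norm_sq_eq _).symm

lemma dotProduct_self_eq_norm_toLp_sq (x : β → ℝ) : x ⬝ᵥ x = ‖WithLp.toLp 2 x‖ ^ 2 := by
  rw [← sum_sq_eq_norm_toLp_sq]; simp only [dotProduct, sq]

lemma dotProduct_mulVec_self (A : Matrix α β ℝ) (x : β → ℝ) :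
    (A *ᵥ x) ⬝ᵥ (A *ᵥ x) = x ⬝ᵥ ((Aᵀ * A) *ᵥ x) := by
  rw [dotProduct_mulVec, dotProduct_comm, ← mulVec_transpose, mulVec_mulVec]

lemma frobNorm_nonneg (A : Matrix α β ℝ) : 0 ≤ frobNorm A := Real.sqrt_nonneg _

lemma frobNorm_sq (A : Matrix α β ℝ) : frobNorm A ^ 2 = ∑ i, A i ⬝ᵥ A i := by
  rw [frobNorm, Real.sq_sqrt (by positivity)]
  simp only [dotProduct, sq]

lemma frobNorm_transpose (A : Matrix α β ℝ) : frobNorm Aᵀ = frobNorm A := by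
  rw [frobNorm, frobNorm, Finset.sum_comm]; rfl

lemma frobNorm_smul (c : ℝ) (A : Matrix α β ℝ) : frobNorm (c • A) = |c| * frobNorm A := by
  simp only [frobNorm, Matrix.smul_apply, smul_eq_mul, mul_pow, ← Finset.mul_sum]
  rw [Real.sqrt_mul (sq_nonneg c), Real.sqrt_sq_eq_abs]

lemma mul_frobNorm_le_of_forall_abs_le {A B : Matrix α β ℝ} {g : ℝ} (hg : 0 ≤ g)
    (h : ∀ i j, g * |A i j| ≤ |B i j|) : g * frobNorm A ≤ frobNorm B := by
  rw [frobNorm, frobNorm, ← Real.sqrt_sq hg, ← Real.sqrt_mul (sq_nonneg g), Finset.mul_sum]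
  refine Real.sqrt_le_sqrt (Finset.sum_le_sum fun i _ => ?_)
  rw [Finset.mul_sum]
  refine Finset.sum_le_sum fun j _ => ?_
  rw [← sq_abs (A i j), ← sq_abs (B i j), ← mul_pow]
  exact pow_le_pow_left₀ (by positivity) (h i j) 2

section L2OpNorm

variable [DecidableEq β]

lemma specNorm_eq_l2_opNorm (A : Matrix α β ℝ) : specNorm A = ‖A‖ := by
  have hsphere : Metric.sphere (0 : EuclideanSpace ℝ β) 1 =
      WithLp.toLp 2 '' {x | ∑ j, x j ^ 2 = 1} := by
    ext y
    simp only [mem_sphere_zero_iff_norm, Set.mem_image, Set.mem_ofPred_eq, sum_sq_eq_norm_toLp_sq,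
      pow_eq_one_iff_of_nonneg (norm_nonneg _) two_ne_zero]
    exact ⟨fun h => ⟨y.ofLp, h, rfl⟩, by rintro ⟨x, hx, rfl⟩; exact hx⟩
  rw [l2_opNorm_def, ← ContinuousLinearMap.sSup_sphere_eq_norm, hsphere, Set.image_image,
    specNorm]
  congr 1
  refine Set.image_congr fun x _ => ?_
  simp [EuclideanSpace.norm_eq]

lemma l2_opNorm_transpose [DecidableEq α] (A : Matrix α β ℝ) : ‖Aᵀ‖ = ‖A‖ := by
  simpa using l2_opNorm_conjTranspose A

lemma dotProduct_mulVec_self_le (A : Matrix α β ℝ) (x : β → ℝ) :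
    (A *ᵥ x) ⬝ᵥ (A *ᵥ x) ≤ ‖A‖ ^ 2 * (x ⬝ᵥ x) := by
  rw [dotProduct_self_eq_norm_toLp_sq, dotProduct_self_eq_norm_toLp_sq, ← mul_pow]
  exact pow_le_pow_left₀ (norm_nonneg _) (l2_opNorm_mulVec A (WithLp.toLp 2 x)) 2

lemma l2_opNorm_le_of_dotProduct_mulVec_self_le (A : Matrix α β ℝ) {c : ℝ} (hc : 0 ≤ c)
    (h : ∀ x, (A *ᵥ x) ⬝ᵥ (A *ᵥ x) ≤ c ^ 2 * (x ⬝ᵥ x)) : ‖A‖ ≤ c := by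
  rw [l2_opNorm_def]
  refine ContinuousLinearMap.opNorm_le_bound _ hc fun x => ?_
  have := h x.ofLp
  rw [dotProduct_self_eq_norm_toLp_sq, dotProduct_self_eq_norm_toLp_sq, ← mul_pow] at this
  exact (pow_le_pow_iff_left₀ (norm_nonneg _) (by positivity) two_ne_zero).mp this

lemma l2_opNorm_le_one_of_transpose_mul_self {U : Matrix β β ℝ} (hU : Uᵀ * U = 1) : ‖U‖ ≤ 1 :=
  l2_opNorm_le_of_dotProduct_mulVec_self_le U zero_le_one fun x => by
    rw [dotProduct_mulVec_self, hU, one_mulVec, one_pow, one_mul]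

end L2OpNorm

lemma frobNorm_mul_le_right [DecidableEq β] [DecidableEq γ] (A : Matrix α β ℝ)
    (B : Matrix β γ ℝ) : frobNorm (A * B) ≤ frobNorm A * ‖B‖ := by
  rw [← abs_of_nonneg (frobNorm_nonneg (A * B)),
    ← abs_of_nonneg (mul_nonneg (frobNorm_nonneg A) (norm_nonneg B)), ← sq_le_sq, mul_pow,
    frobNorm_sq, frobNorm_sq, Finset.sum_mul]
  refine Finset.sum_le_sum fun i _ => ?_
  have hrow : (A * B) i = Bᵀ *ᵥ A i := by rw [mulVec_transpose]; rfl
  rw [hrow, mul_comm, ← l2_opNorm_transpose B]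
  exact dotProduct_mulVec_self_le Bᵀ (A i)

lemma frobNorm_mul_le_left [DecidableEq α] [DecidableEq β] (A : Matrix α β ℝ)
    (B : Matrix β γ ℝ) : frobNorm (A * B) ≤ ‖A‖ * frobNorm B := by
  rw [← frobNorm_transpose, transpose_mul, mul_comm, ← frobNorm_transpose B,
    ← l2_opNorm_transpose A]
  exact frobNorm_mul_le_right Bᵀ Aᵀ

end Norms

section Projections

variable {ι : Type*} [Fintype ι] [DecidableEq ι]

noncomputable def colSpanProj (U : Matrix ι ι ℝ) (s : Finset ι) : Matrix ι ι ℝ :=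
  U * diagonal (fun i => if i ∈ s then 1 else 0) * Uᵀ

lemma colSpanProj_transpose (U : Matrix ι ι ℝ) (s : Finset ι) :
    (colSpanProj U s)ᵀ = colSpanProj U s := by
  simp [colSpanProj, transpose_mul, Matrix.mul_assoc]

lemma colSpanProj_mul_self {U : Matrix ι ι ℝ} (hU : Uᵀ * U = 1) (s : Finset ι) :
    colSpanProj U s * colSpanProj U s = colSpanProj U s := by
  have hJ : diagonal (fun i => if i ∈ s then (1 : ℝ) else 0) *
      diagonal (fun i => if i ∈ s then 1 else 0) =
        diagonal (fun i => if i ∈ s then 1 else 0) := by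
    rw [diagonal_mul_diagonal]; congr 1; ext i; split_ifs <;> simp
  calc colSpanProj U s * colSpanProj U s
      = U * diagonal (fun i => if i ∈ s then 1 else 0) * (Uᵀ * U) *
          diagonal (fun i => if i ∈ s then 1 else 0) * Uᵀ := by
        simp only [colSpanProj, Matrix.mul_assoc]
    _ = colSpanProj U s := by rw [hU, Matrix.mul_one, Matrix.mul_assoc U, hJ]; rfl

lemma Fin.image_castLE_univ {r m : ℕ} (h : r < m) :
    Finset.univ.image (Fin.castLE h.le) = Finset.Iio ⟨r, h⟩ := by
  ext i
  simp only [Finset.mem_image, Finset.mem_univ, true_and, Finset.mem_Iio, Fin.lt_def]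
  exact ⟨by rintro ⟨j, rfl⟩; exact j.isLt, fun hi => ⟨⟨i, hi⟩, rfl⟩⟩

lemma submatrix_mul_transpose_submatrix {κ : Type*} [Fintype κ] (U : Matrix ι ι ℝ) {e : κ → ι}
    (he : Function.Injective e) :
    U.submatrix id e * (U.submatrix id e)ᵀ = colSpanProj U (Finset.univ.image e) := by
  ext a b
  rw [colSpanProj, mul_apply, mul_apply]
  simp only [mul_diagonal, submatrix_apply, transpose_apply, id, mul_ite, mul_one, mul_zero,
    ite_mul, zero_mul]
  rw [← Finset.sum_filter, Finset.filter_mem_eq_inter, Finset.univ_inter,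
    Finset.sum_image fun x _ y _ h => he h]

lemma submatrix_castLE_mul_transpose {r m : ℕ} (hrm : r < m) (U : Matrix (Fin m) (Fin m) ℝ) :
    U.submatrix id (Fin.castLE hrm.le) * (U.submatrix id (Fin.castLE hrm.le))ᵀ =
      colSpanProj U (Finset.Iio ⟨r, hrm⟩) := by
  rw [submatrix_mul_transpose_submatrix U (Fin.castLE_injective _), Fin.image_castLE_univ]

lemma l2_opNorm_sub_le_one {P Q : Matrix ι ι ℝ} (hP : Pᵀ = P) (hQ : Qᵀ = Q) (hPP : P * P = P)
    (hQQ : Q * Q = Q) : ‖P - Q‖ ≤ 1 := by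
  have key : (P - Q) * (P - Q) + (1 - P - Q) * (1 - P - Q) = 1 := by
    simp only [sub_mul, mul_sub, one_mul, mul_one, hPP, hQQ]; abel
  refine l2_opNorm_le_of_dotProduct_mulVec_self_le _ zero_le_one fun x => ?_
  have hsum := congrArg (fun M => x ⬝ᵥ (M *ᵥ x)) key
  have hR := dotProduct_mulVec_self (1 - P - Q) x
  have hRnonneg := dotProduct_self_star_nonneg ((1 - P - Q) *ᵥ x)
  simp only [add_mulVec, dotProduct_add, one_mulVec] at hsum
  simp only [transpose_sub, transpose_one, hP, hQ, star_trivial] at hR hRnonneg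
  rw [dotProduct_mulVec_self, one_pow, one_mul, transpose_sub, hP, hQ]
  linarith

end Projections

section SinTheta

variable {ι : Type*} [Fintype ι] [DecidableEq ι]

lemma frobNorm_mul_mul_le {A B M : Matrix ι ι ℝ} (hA : ‖A‖ ≤ 1) (hB : ‖B‖ ≤ 1) :
    frobNorm (A * M * B) ≤ frobNorm M :=
  calc frobNorm (A * M * B) ≤ ‖A‖ * frobNorm M * ‖B‖ :=
        (frobNorm_mul_le_right _ B).trans
          (mul_le_mul_of_nonneg_right (frobNorm_mul_le_left A M) (norm_nonneg B))
    _ ≤ 1 * frobNorm M * 1 := by have := frobNorm_nonneg M; gcongr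
    _ = frobNorm M := by ring

lemma mul_frobNorm_colSpanProj_sub_le {U V : Matrix ι ι ℝ} (hU : Uᵀ * U = 1) (hV : Vᵀ * V = 1)
    (a b : ι → ℝ) (s : Finset ι) {g : ℝ} (hg : 0 ≤ g)
    (hgap : ∀ i j, (i ∈ s ↔ j ∉ s) → g ≤ |b j - a i|) :
    g * frobNorm (colSpanProj U s - colSpanProj V s) ≤
      frobNorm (V * diagonal b * Vᵀ - U * diagonal a * Uᵀ) := by
  set J : Matrix ι ι ℝ := diagonal fun i => if i ∈ s then 1 else 0
  set Z := Uᵀ * V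
  have hU' : U * Uᵀ = 1 := mul_eq_one_comm.mp hU
  have hV' : V * Vᵀ = 1 := mul_eq_one_comm.mp hV
  have hUnorm : ‖U‖ ≤ 1 := l2_opNorm_le_one_of_transpose_mul_self hU
  have hVnorm : ‖V‖ ≤ 1 := l2_opNorm_le_one_of_transpose_mul_self hV
  have hproj : colSpanProj U s - colSpanProj V s = U * (J * Z - Z * J) * Vᵀ := by
    simp only [colSpanProj, Z, mul_sub, sub_mul, ← Matrix.mul_assoc, hU', Matrix.one_mul]
    simp only [Matrix.mul_assoc, hV', Matrix.mul_one]
    rfl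
  have hpert : Uᵀ * (V * diagonal b * Vᵀ - U * diagonal a * Uᵀ) * V =
      Z * diagonal b - diagonal a * Z := by
    simp only [Z, mul_sub, sub_mul, ← Matrix.mul_assoc, hU, Matrix.one_mul]
    simp only [Matrix.mul_assoc, hV, Matrix.mul_one]
  have hentry : ∀ i j, g * |(J * Z - Z * J) i j| ≤ |(Z * diagonal b - diagonal a * Z) i j| := by
    intro i j
    simp only [J, Matrix.sub_apply, diagonal_mul, mul_diagonal]
    rw [show ∀ x y z : ℝ, x * z - z * y = (x - y) * z by intros; ring,
      show ∀ x y z : ℝ, z * x - y * z = (x - y) * z by intros; ring, abs_mul, abs_mul, ← mul_assoc]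
    refine mul_le_mul_of_nonneg_right ?_ (abs_nonneg _)
    have := hgap i j
    by_cases hi : i ∈ s <;> by_cases hj : j ∈ s <;> simp_all
  calc g * frobNorm (colSpanProj U s - colSpanProj V s) ≤ g * frobNorm (J * Z - Z * J) := by
        rw [hproj]
        exact mul_le_mul_of_nonneg_left
          (frobNorm_mul_mul_le hUnorm (by rwa [l2_opNorm_transpose])) hg
    _ ≤ frobNorm (Z * diagonal b - diagonal a * Z) := mul_frobNorm_le_of_forall_abs_le hg hentry
    _ ≤ frobNorm (V * diagonal b * Vᵀ - U * diagonal a * Uᵀ) := by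
        rw [← hpert]
        exact frobNorm_mul_mul_le (by rwa [l2_opNorm_transpose]) hVnorm

lemma frobNorm_colSpanProj_sub_mul_le_frobNorm {κ : Type*} [Fintype κ] {U V : Matrix ι ι ℝ}
    (hU : Uᵀ * U = 1) (hV : Vᵀ * V = 1) (s : Finset ι) (W : Matrix ι κ ℝ) :
    frobNorm ((colSpanProj U s - colSpanProj V s) * W) ≤ frobNorm W :=
  calc frobNorm ((colSpanProj U s - colSpanProj V s) * W)
      ≤ ‖colSpanProj U s - colSpanProj V s‖ * frobNorm W := frobNorm_mul_le_left _ W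
    _ ≤ 1 * frobNorm W := by
        have := frobNorm_nonneg W
        gcongr
        exact l2_opNorm_sub_le_one (colSpanProj_transpose U s) (colSpanProj_transpose V s)
          (colSpanProj_mul_self hU s) (colSpanProj_mul_self hV s)
    _ = frobNorm W := one_mul _

end SinTheta

section Weyl

variable {ι : Type*} [Fintype ι] [LinearOrder ι]

omit [LinearOrder ι] in
lemma dotProduct_conj_diagonal_mulVec [DecidableEq ι] (U : Matrix ι ι ℝ) (d x : ι → ℝ) :
    x ⬝ᵥ ((U * diagonal d * Uᵀ) *ᵥ x) = ∑ i, d i * (Uᵀ *ᵥ x) i ^ 2 := by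
  rw [← mulVec_mulVec, ← mulVec_mulVec, dotProduct_mulVec, ← mulVec_transpose]
  simp only [dotProduct, mulVec_diagonal]
  exact Finset.sum_congr rfl fun i _ => by ring

lemma exists_ne_zero_mulVec_eq_zero_of_lt_of_gt (A B : Matrix ι ι ℝ) (p : ι) :
    ∃ x ≠ 0, (∀ j, p < j → (A *ᵥ x) j = 0) ∧ ∀ i, i < p → (B *ᵥ x) i = 0 := by
  let M : Matrix ι ι ℝ := of fun j => if p < j then A j else if j < p then B j else 0
  obtain ⟨x, hx0, hMx⟩ := exists_mulVec_eq_zero_iff (M := M) |>.mpr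
    (det_eq_zero_of_row_eq_zero p fun j => by simp [M])
  refine ⟨x, hx0, fun j hj => ?_, fun i hi => ?_⟩
  · simpa [M, hj, mulVec] using congrFun hMx j
  · simpa [M, hi, hi.asymm, mulVec] using congrFun hMx i

lemma mul_dotProduct_self_le_of_antitone {d : ι → ℝ} (hd : Antitone d) {w : ι → ℝ} {p : ι}
    (hw : ∀ j, p < j → w j = 0) : d p * (w ⬝ᵥ w) ≤ ∑ j, d j * w j ^ 2 := by
  rw [dotProduct, Finset.mul_sum]
  refine Finset.sum_le_sum fun j _ => ?_
  rcases le_or_gt j p with hj | hj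
  · rw [← sq]; exact mul_le_mul_of_nonneg_right (hd hj) (sq_nonneg _)
  · simp [hw j hj]

lemma sum_le_mul_dotProduct_self_of_antitone {d : ι → ℝ} (hd : Antitone d) {w : ι → ℝ} {p : ι}
    (hw : ∀ i, i < p → w i = 0) : ∑ i, d i * w i ^ 2 ≤ d p * (w ⬝ᵥ w) := by
  rw [dotProduct, Finset.mul_sum]
  refine Finset.sum_le_sum fun i _ => ?_
  rcases lt_or_ge i p with hi | hi
  · simp [hw i hi]
  · rw [← sq]; exact mul_le_mul_of_nonneg_right (hd hi) (sq_nonneg _)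

lemma le_add_of_forall_dotProduct_mulVec_le [DecidableEq ι] {U V : Matrix ι ι ℝ}
    (hU : Uᵀ * U = 1) (hV : Vᵀ * V = 1) {a b : ι → ℝ} (ha : Antitone a) (hb : Antitone b) {ε : ℝ}
    (h : ∀ x, x ⬝ᵥ ((V * diagonal b * Vᵀ) *ᵥ x) ≤
      x ⬝ᵥ ((U * diagonal a * Uᵀ) *ᵥ x) + ε * (x ⬝ᵥ x)) (p : ι) :
    b p ≤ a p + ε := by
  -- Courant–Fischer: `x` lies in the span of the first `p + 1` columns of `V` and is orthogonal
  -- to the first `p` columns of `U`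
  obtain ⟨x, hx0, hVx, hUx⟩ := exists_ne_zero_mulVec_eq_zero_of_lt_of_gt Vᵀ Uᵀ p
  have hnorm : ∀ {W : Matrix ι ι ℝ}, Wᵀ * W = 1 → (Wᵀ *ᵥ x) ⬝ᵥ (Wᵀ *ᵥ x) = x ⬝ᵥ x :=
    fun hW => by
      rw [dotProduct_mulVec_self, transpose_transpose, mul_eq_one_comm.mp hW, one_mulVec]
  have hx : 0 < x ⬝ᵥ x := by simpa using dotProduct_self_star_pos_iff.mpr hx0
  have := h x
  rw [dotProduct_conj_diagonal_mulVec, dotProduct_conj_diagonal_mulVec] at this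
  have h1 := mul_dotProduct_self_le_of_antitone hb hVx
  have h2 := sum_le_mul_dotProduct_self_of_antitone ha hUx
  rw [hnorm hV] at h1
  rw [hnorm hU] at h2
  nlinarith

lemma le_and_le_add_of_eq_add_mul_transpose [DecidableEq ι] {κ : Type*} [Fintype κ]
    [DecidableEq κ] {U V : Matrix ι ι ℝ} (hU : Uᵀ * U = 1) (hV : Vᵀ * V = 1) {a b : ι → ℝ}
    (ha : Antitone a) (hb : Antitone b) {μ : ℝ} (hμ : 0 ≤ μ) (W : Matrix ι κ ℝ)
    (hT : V * diagonal b * Vᵀ = U * diagonal a * Uᵀ + μ • (W * Wᵀ)) :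
    (∀ i, a i ≤ b i) ∧ ∀ i, b i ≤ a i + μ * ‖W‖ ^ 2 := by
  have hquad : ∀ x, x ⬝ᵥ ((V * diagonal b * Vᵀ) *ᵥ x) =
      x ⬝ᵥ ((U * diagonal a * Uᵀ) *ᵥ x) + μ * ((Wᵀ *ᵥ x) ⬝ᵥ (Wᵀ *ᵥ x)) := fun x => by
    rw [hT, add_mulVec, dotProduct_add, smul_mulVec, dotProduct_smul, dotProduct_mulVec_self,
      transpose_transpose, smul_eq_mul]
  refine ⟨fun i => ?_, le_add_of_forall_dotProduct_mulVec_le hU hV ha hb fun x => ?_⟩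
  · refine (le_add_of_forall_dotProduct_mulVec_le (ε := 0) hV hU hb ha (fun x => ?_) i).trans_eq
      (add_zero _)
    have := dotProduct_self_star_nonneg (Wᵀ *ᵥ x)
    rw [hquad, zero_mul, add_zero]
    simp only [star_trivial] at this
    nlinarith
  · have := dotProduct_mulVec_self_le Wᵀ x
    rw [l2_opNorm_transpose] at this
    rw [hquad, mul_assoc]
    nlinarith

end Weyl

section Perturbation

variable {m n : ℕ}

lemma le_abs_sub_of_interlace {r : ℕ} (hr1 : 1 ≤ r) (hrm : r < m) {a b : Fin m → ℝ}
    (ha : Antitone a) (hb : Antitone b) {ε : ℝ} (hε : 0 ≤ ε) (hab : ∀ i, a i ≤ b i)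
    (hba : ∀ i, b i ≤ a i + ε) (i j : Fin m)
    (hij : i ∈ Finset.Iio ⟨r, hrm⟩ ↔ j ∉ Finset.Iio ⟨r, hrm⟩) :
    a ⟨r - 1, by omega⟩ - a ⟨r, hrm⟩ - ε ≤ |b j - a i| := by
  have hlt : ∀ k : Fin m, k < ⟨r, hrm⟩ ↔ k ≤ ⟨r - 1, by omega⟩ := fun k => by
    simp only [Fin.lt_def, Fin.le_def]; omega
  simp only [Finset.mem_Iio, not_lt] at hij
  by_cases hi : i < ⟨r, hrm⟩
  · have := ha ((hlt i).mp hi)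
    have := hb (hij.mp hi)
    have := hba ⟨r, hrm⟩
    rw [abs_sub_comm]
    exact le_trans (by linarith) (le_abs_self _)
  · have hj : j ≤ ⟨r - 1, by omega⟩ := (hlt j).mp (by simpa [hi] using hij.not.mp hi)
    have := hb hj
    have := hab ⟨r - 1, by omega⟩
    have := ha (not_lt.mp hi)
    exact le_trans (by linarith) (le_abs_self _)

theorem frobNorm_colSpanProj_sub_mul_le {r : ℕ} (hr1 : 1 ≤ r) (hrm : r < m) {μ : ℝ}
    (hμ : 0 ≤ μ) (W : Matrix (Fin m) (Fin n) ℝ) {U V : Matrix (Fin m) (Fin m) ℝ}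
    (hU : Uᵀ * U = 1) (hV : Vᵀ * V = 1) {a b : Fin m → ℝ} (ha : Antitone a) (hb : Antitone b)
    (hT : V * diagonal b * Vᵀ = U * diagonal a * Uᵀ + μ • (W * Wᵀ))
    (hgap : a ⟨r, hrm⟩ < a ⟨r - 1, by omega⟩) :
    frobNorm ((colSpanProj U (Finset.Iio ⟨r, hrm⟩) - colSpanProj V (Finset.Iio ⟨r, hrm⟩)) * W) ≤
      2 * ‖W‖ ^ 2 * frobNorm W / (a ⟨r - 1, by omega⟩ - a ⟨r, hrm⟩) * μ := by
  set s : Finset (Fin m) := Finset.Iio ⟨r, hrm⟩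
  set δ := a ⟨r - 1, by omega⟩ - a ⟨r, hrm⟩
  set P := colSpanProj U s - colSpanProj V s
  have hδ : 0 < δ := sub_pos.mpr hgap
  have hWF := frobNorm_nonneg W
  have hW := norm_nonneg W
  rcases le_or_gt (2 * μ * ‖W‖ ^ 2) δ with hsmall | hlarge
  · obtain ⟨hab, hba⟩ := le_and_le_add_of_eq_add_mul_transpose hU hV ha hb hμ W hT
    have hsin := mul_frobNorm_colSpanProj_sub_le hU hV a b s (g := δ - μ * ‖W‖ ^ 2)
      (by nlinarith) fun i j hij =>
        le_abs_sub_of_interlace hr1 hrm ha hb (by positivity) hab hba i j hij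
    rw [hT, add_sub_cancel_left, frobNorm_smul, abs_of_nonneg hμ] at hsin
    have hWW : frobNorm (W * Wᵀ) ≤ frobNorm W * ‖W‖ := by
      simpa [l2_opNorm_transpose] using frobNorm_mul_le_right W Wᵀ
    have hP := frobNorm_nonneg P
    rw [div_mul_eq_mul_div, le_div_iff₀ hδ]
    calc frobNorm (P * W) * δ ≤ frobNorm P * ‖W‖ * δ := by
          gcongr; exact frobNorm_mul_le_right P W
      _ ≤ 2 * ‖W‖ * ((δ - μ * ‖W‖ ^ 2) * frobNorm P) := by
        nlinarith [mul_nonneg (mul_nonneg hP hW) (sub_nonneg.mpr hsmall)]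
      _ ≤ 2 * ‖W‖ * (μ * (frobNorm W * ‖W‖)) := by
        gcongr 2 * ‖W‖ * ?_
        exact hsin.trans (mul_le_mul_of_nonneg_left hWW hμ)
      _ = 2 * ‖W‖ ^ 2 * frobNorm W * μ := by ring
  · calc frobNorm (P * W) ≤ 1 * frobNorm W := by
          rw [one_mul]; exact frobNorm_colSpanProj_sub_mul_le_frobNorm hU hV s W
      _ ≤ 2 * μ * ‖W‖ ^ 2 / δ * frobNorm W := by
        gcongr
        rw [le_div_iff₀ hδ]; linarith
      _ = 2 * ‖W‖ ^ 2 * frobNorm W / δ * μ := by ring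

end Perturbation

/-- degenerate-case convergence bound: With `rank X = k ≥ r`
and `σ_r(WX) ≠ σ_{r+1}(WX)`, for `W₀ = U_rU_rᵀW` (`U_r` the first `r` left
singular vectors of `WX`) and `W_μ` built from the first `r` left singular
vectors of `W(XXᵀ + μI)^{1/2}`,
`‖W₀ − W_μ‖_F ≤ (2‖W‖₂²‖W‖_F (σ₁(X)/σ_k(X) + max(1, μ/(4σ_k(X)²))) /
(σ_r(WX)² − σ_{r+1}(WX)²)) · μ`. -/
theorem stmt16 {m n k : ℕ} (r : ℕ) (hr1 : 1 ≤ r) (hrk : r ≤ k) (hrm : r < m)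
    (μ : ℝ) (hμ : 0 ≤ μ)
    (W : Matrix (Fin m) (Fin n) ℝ) (X : Matrix (Fin n) (Fin k) ℝ)
    (h2 : (X * Xᵀ + μ • (1 : Matrix (Fin n) (Fin n) ℝ)).PosSemidef)
    (sx : Fin k → ℝ) (hposx : ∀ i, 0 ≤ sx i)
    -- left singular vectors / singular values of WX
    (U0 : Matrix (Fin m) (Fin m) ℝ) (s0 : Fin m → ℝ) (hU0 : U0ᵀ * U0 = 1)
    (hsvd0 : (W * X) * (W * X)ᵀ =
      U0 * Matrix.diagonal (fun i => (s0 i) ^ 2) * U0ᵀ)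
    (hmono0 : Antitone s0) (hpos0 : ∀ i, 0 ≤ s0 i)
    -- left singular vectors of W(XXᵀ + μI)^{1/2}
    (Uμ : Matrix (Fin m) (Fin m) ℝ) (sμ : Fin m → ℝ) (hUμ : Uμᵀ * Uμ = 1)
    (hsvdμ : (W * h2.sqrt) * (W * h2.sqrt)ᵀ =
      Uμ * Matrix.diagonal (fun i => (sμ i) ^ 2) * Uμᵀ)
    (hmonoμ : Antitone sμ) (hposμ : ∀ i, 0 ≤ sμ i)
    (hgap : s0 ⟨r - 1, by omega⟩ ≠ s0 ⟨r, hrm⟩)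
    (Ur0 Urμ : Matrix (Fin m) (Fin r) ℝ)
    (hUr0 : Ur0 = U0.submatrix id (Fin.castLE hrm.le))
    (hUrμ : Urμ = Uμ.submatrix id (Fin.castLE hrm.le)) :
    frobNorm (Ur0 * Ur0ᵀ * W - Urμ * Urμᵀ * W) ≤
      (2 * specNorm W ^ 2 * frobNorm W *
          (sx ⟨0, by omega⟩ / sx ⟨k - 1, by omega⟩ +
            max 1 (μ / (4 * sx ⟨k - 1, by omega⟩ ^ 2))) /
        (s0 ⟨r - 1, by omega⟩ ^ 2 - s0 ⟨r, hrm⟩ ^ 2)) * μ := by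
  have hsq : ∀ {s : Fin m → ℝ}, Antitone s → (∀ i, 0 ≤ s i) → Antitone fun i => s i ^ 2 :=
    fun hs hs0 _ _ hij => pow_le_pow_left₀ (hs0 _) (hs hij) 2
  have hT : Uμ * diagonal (fun i => sμ i ^ 2) * Uμᵀ =
      U0 * diagonal (fun i => s0 i ^ 2) * U0ᵀ + μ • (W * Wᵀ) := by
    rw [← hsvdμ, ← hsvd0, h2.mul_sqrt_mul_transpose, transpose_mul]
    simp only [Matrix.mul_add, Matrix.add_mul, Matrix.mul_smul, Matrix.smul_mul, Matrix.mul_one,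
      Matrix.mul_assoc]
  have hgap' : s0 ⟨r, hrm⟩ ^ 2 < s0 ⟨r - 1, by omega⟩ ^ 2 :=
    pow_lt_pow_left₀ ((hmono0 (Fin.mk_le_mk.mpr (Nat.sub_le r 1))).lt_of_ne' hgap) (hpos0 _)
      two_ne_zero
  have hC : 1 ≤ sx ⟨0, by omega⟩ / sx ⟨k - 1, by omega⟩ +
      max 1 (μ / (4 * sx ⟨k - 1, by omega⟩ ^ 2)) := by
    have := div_nonneg (hposx ⟨0, by omega⟩) (hposx ⟨k - 1, by omega⟩)
    linarith [le_max_left 1 (μ / (4 * sx ⟨k - 1, by omega⟩ ^ 2))]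
  rw [hUr0, hUrμ, submatrix_castLE_mul_transpose hrm, submatrix_castLE_mul_transpose hrm,
    ← Matrix.sub_mul, specNorm_eq_l2_opNorm]
  have hbound := frobNorm_colSpanProj_sub_mul_le hr1 hrm hμ W hU0 hUμ (hsq hmono0 hpos0)
    (hsq hmonoμ hposμ) hT hgap'
  calc _ ≤ _ := hbound
    _ ≤ _ * (sx ⟨0, by omega⟩ / sx ⟨k - 1, by omega⟩ +
          max 1 (μ / (4 * sx ⟨k - 1, by omega⟩ ^ 2))) :=
        le_mul_of_one_le_right ((frobNorm_nonneg _).trans hbound) hC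
    _ = _ := by ring
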